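/- Let l ≥ 3 and let a, b_1, …, b_l be integers with b_i ≥ 0 and a + b_i ≥ 0 for all i. If l·a² + 2a·(b_1+⋯+b_l) + 2·Σ_{i=1}^{l} b_i b_{i+1} + (l−2)·a + 2·(b_1+⋯+b_l) = 0 (indices cyclic mod l), then a = 0 and b_i = 0 for all i. -/

import Mathlib

/-!
Pair the vertices of the polygon along its edges: the exponent plus `2a` is the sum over the
edges `(i, i + 1)` of `(a + bᵢ)(a + bᵢ₊₁) + bᵢbᵢ₊₁ + (a + bᵢ + bᵢ₊₁)`. On admissible states every
summand is nonnegative, so the vanishing of the exponent forces `a ≥ 0`; then each summand is at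
least `a² + a + bᵢ`, and `l (a² + a) + ∑ bᵢ ≤ 2a` with `l ≥ 3` leaves only `a = 0`, `∑ bᵢ = 0`.
-/

open Finset

theorem Finset.sum_range_comp_succ_mod {M : Type*} [AddCommMonoid M] (f : ℕ → M) (l : ℕ) :
    ∑ i ∈ range l, f ((i + 1) % l) = ∑ i ∈ range l, f i := by
  cases l with
  | zero => simp
  | succ m =>
    rw [sum_range_succ, sum_range_succ' f, Nat.mod_self]
    congr 1
    exact sum_congr rfl fun i hi => by rw [Nat.mod_eq_of_lt (by simpa using hi)]

section PolygonEdge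

variable {R : Type*} [CommRing R]

def polygonEdgeTerm (a x y : R) : R := (a + x) * (a + y) + x * y + (a + x + y)

theorem sum_polygonEdgeTerm (l : ℕ) (a : R) (b : ℕ → R) :
    ∑ i ∈ range l, polygonEdgeTerm a (b i) (b ((i + 1) % l)) =
      (l : R) * a ^ 2 + 2 * a * (∑ i ∈ range l, b i)
        + 2 * (∑ i ∈ range l, b i * b ((i + 1) % l))
        + ((l : R) - 2) * a + 2 * (∑ i ∈ range l, b i) + 2 * a := by
  have hshift := sum_range_comp_succ_mod b l
  simp only [polygonEdgeTerm, add_mul, mul_add, sum_add_distrib, ← mul_sum, ← sum_mul,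
    sum_const, card_range, nsmul_eq_mul, hshift]
  ring

variable [PartialOrder R] [IsOrderedRing R] {a x y : R}

theorem polygonEdgeTerm_nonneg (hx : 0 ≤ x) (hy : 0 ≤ y) (hax : 0 ≤ a + x) (hay : 0 ≤ a + y) :
    0 ≤ polygonEdgeTerm a x y := by
  unfold polygonEdgeTerm
  exact add_nonneg (add_nonneg (mul_nonneg hax hay) (mul_nonneg hx hy)) (add_nonneg hax hy)

theorem sq_add_add_le_polygonEdgeTerm (ha : 0 ≤ a) (hx : 0 ≤ x) (hy : 0 ≤ y) :
    a ^ 2 + a + x ≤ polygonEdgeTerm a x y := by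
  have hdiff : polygonEdgeTerm a x y - (a ^ 2 + a + x) = a * x + a * y + 2 * (x * y) + y := by
    unfold polygonEdgeTerm; ring
  refine sub_nonneg.1 (hdiff ▸ ?_)
  exact add_nonneg (add_nonneg (add_nonneg (mul_nonneg ha hx) (mul_nonneg ha hy))
    (mul_nonneg zero_le_two (mul_nonneg hx hy))) hy

end PolygonEdge

/-- For the polygon graph P_l, the exponent A(a,b)+B(a,b) vanishes only at the
trivial admissible state. -/
theorem stmt_3 (l : ℕ) (hl : 3 ≤ l) (a : ℤ) (b : ℕ → ℤ)
    (hb : ∀ i < l, 0 ≤ b i) (hab : ∀ i < l, 0 ≤ a + b i)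
    (h : (l : ℤ) * a ^ 2 + 2 * a * (∑ i ∈ Finset.range l, b i)
      + 2 * (∑ i ∈ Finset.range l, b i * b ((i + 1) % l))
      + ((l : ℤ) - 2) * a + 2 * (∑ i ∈ Finset.range l, b i) = 0) :
    a = 0 ∧ ∀ i < l, b i = 0 := by
  have hnext : ∀ i, (i + 1) % l < l := fun i => Nat.mod_lt _ (by omega)
  have hsum : ∑ i ∈ range l, polygonEdgeTerm a (b i) (b ((i + 1) % l)) = 2 * a := by
    rw [sum_polygonEdgeTerm, h, zero_add]
  have ha : 0 ≤ a := by
    have := sum_nonneg fun i (hi : i ∈ range l) => polygonEdgeTerm_nonneg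
      (hb i (mem_range.1 hi)) (hb _ (hnext i)) (hab i (mem_range.1 hi)) (hab _ (hnext i))
    linarith
  have hlower : (l : ℤ) * (a ^ 2 + a) + ∑ i ∈ range l, b i ≤ 2 * a := by
    calc (l : ℤ) * (a ^ 2 + a) + ∑ i ∈ range l, b i = ∑ i ∈ range l, (a ^ 2 + a + b i) := by
          rw [sum_add_distrib, sum_const, card_range, nsmul_eq_mul]
      _ ≤ 2 * a := hsum ▸ sum_le_sum fun i hi =>
          sq_add_add_le_polygonEdgeTerm ha (hb i (mem_range.1 hi)) (hb _ (hnext i))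
  have hbsum : 0 ≤ ∑ i ∈ range l, b i := sum_nonneg fun i hi => hb i (mem_range.1 hi)
  have hl3 : (3 : ℤ) ≤ l := by exact_mod_cast hl
  have ha0 : a = 0 := by nlinarith
  subst ha0
  have hbsum0 : ∑ i ∈ range l, b i = 0 := by linarith
  refine ⟨rfl, fun i hi => ?_⟩
  exact (sum_eq_zero_iff_of_nonneg fun j hj => hb j (mem_range.1 hj)).1 hbsum0 i (mem_range.2 hi)
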